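/- Consider a Tree-PIN source on a tree G = ([m], E) (edge pairs (T_e, Y_e) mutually independent across edges, terminal variables X_k given by the incident edge components), with m ≥ 2. Then min_{λ∈Λ([m])} ( H(X_{[m]}) − Σ_{B∈Γ([m])} λ_B H(X_B | X_{B^c}) ) ≤ min_{e∈E} I(T_e ; Y_e). In particular, for each edge e the two-set weight vector assigning λ_{B_e} = λ_{B_e^c} = 1 (where B_e is one component of G with e removed) belongs to Λ([m]) and achieves the value H(X_{[m]}) − H(X_{B_e}|X_{B_e^c}) − H(X_{B_e^c}|X_{B_e}) = I(X_{B_e}; X_{B_e^c}) = I(T_e; Y_e). -/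

import Mathlib

open Finset

/-- Probability that the random variable `X : Ω → α` takes the value `a`,
for a probability mass function `p` on the finite sample space `Ω`. -/
noncomputable def probOf {Ω α : Type*} [Fintype Ω] [DecidableEq α]
    (p : Ω → ℝ) (X : Ω → α) (a : α) : ℝ :=
  ∑ ω ∈ Finset.univ.filter (fun ω => X ω = a), p ω

/-- Shannon entropy (in nats) of the random variable `X : Ω → α` under the
probability mass function `p`. -/
noncomputable def entropy {Ω α : Type*} [Fintype Ω] [Fintype α] [DecidableEq α]
    (p : Ω → ℝ) (X : Ω → α) : ℝ :=
  ∑ a : α, Real.negMulLog (probOf p X a)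

/-- Conditional Shannon entropy `H(X | Y) = H(X, Y) - H(Y)`. -/
noncomputable def condEntropy {Ω α β : Type*} [Fintype Ω]
    [Fintype α] [DecidableEq α] [Fintype β] [DecidableEq β]
    (p : Ω → ℝ) (X : Ω → α) (Y : Ω → β) : ℝ :=
  entropy p (fun ω => (X ω, Y ω)) - entropy p Y

/-- Mutual information `I(X ; Y) = H(X) + H(Y) - H(X, Y)`. -/
noncomputable def mutualInfo {Ω α β : Type*} [Fintype Ω]
    [Fintype α] [DecidableEq α] [Fintype β] [DecidableEq β]
    (p : Ω → ℝ) (X : Ω → α) (Y : Ω → β) : ℝ :=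
  entropy p X + entropy p Y - entropy p (fun ω => (X ω, Y ω))

/-- Conditional mutual information `I(X ; Y | Z) = H(X|Z) + H(Y|Z) - H(X,Y|Z)`. -/
noncomputable def condMutualInfo {Ω α β γ : Type*} [Fintype Ω]
    [Fintype α] [DecidableEq α] [Fintype β] [DecidableEq β]
    [Fintype γ] [DecidableEq γ]
    (p : Ω → ℝ) (X : Ω → α) (Y : Ω → β) (Z : Ω → γ) : ℝ :=
  condEntropy p X Z + condEntropy p Y Z - condEntropy p (fun ω => (X ω, Y ω)) Z

/-- The undirected simple graph on `[m]` underlying the directed edges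
`e ↦ (tl e, hd e)`. -/
def graphOf {m : ℕ} {ε : Type*} (tl hd : ε → Fin m) : SimpleGraph (Fin m) :=
  SimpleGraph.fromRel (fun i j => ∃ e, tl e = i ∧ hd e = j)

/-- In a Tree-PIN source on the tree with directed edges `e = (tl e, hd e)`, the
variable observed by terminal `k` is the tuple of the components `T_e` for edges `e`
leaving `k` together with the components `Y_e` for edges `e` entering `k`. -/
def termRV {Ω : Type*} {m : ℕ} {ε : Type*} (tl hd : ε → Fin m)
    {Tt Yt : ε → Type*} (Te : ∀ e, Ω → Tt e) (Ye : ∀ e, Ω → Yt e) (k : Fin m) :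
    Ω → ((∀ e : {e : ε // tl e = k}, Tt e.1) × (∀ e : {e : ε // hd e = k}, Yt e.1)) :=
  fun ω => (fun e => Te e.1 ω, fun e => Ye e.1 ω)

/-- The tuple `X_B = (X_k : k ∈ B)` of terminal variables of a Tree-PIN source. -/
def termTuple {Ω : Type*} {m : ℕ} {ε : Type*} (tl hd : ε → Fin m)
    {Tt Yt : ε → Type*} (Te : ∀ e, Ω → Tt e) (Ye : ∀ e, Ω → Yt e)
    (B : Finset (Fin m)) :
    Ω → (∀ k : B, ((∀ e : {e : ε // tl e = k.1}, Tt e.1) ×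
      (∀ e : {e : ε // hd e = k.1}, Yt e.1))) :=
  fun ω k => termRV tl hd Te Ye k.1 ω

/-- The edge pairs `(T_e, Y_e)` are mutually independent across edges. -/
def IndepEdgePairs {Ω : Type*} [Fintype Ω] {ε : Type*} [Fintype ε]
    {Tt Yt : ε → Type*} [∀ e, Fintype (Tt e)] [∀ e, DecidableEq (Tt e)]
    [∀ e, Fintype (Yt e)] [∀ e, DecidableEq (Yt e)]
    (p : Ω → ℝ) (Te : ∀ e, Ω → Tt e) (Ye : ∀ e, Ω → Yt e) : Prop :=
  ∀ x : ∀ e, Tt e × Yt e,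
    probOf p (fun ω e => (Te e ω, Ye e ω)) x
      = ∏ e : ε, probOf p (fun ω => (Te e ω, Ye e ω)) (x e)

/-- `Γ(A)`: the family of all nonempty proper subsets `B ⊊ [m]` with `A ⊄ B`. -/
def Gamma (m : ℕ) (A : Finset (Fin m)) : Finset (Finset (Fin m)) :=
  Finset.univ.filter (fun B => B.Nonempty ∧ B ≠ Finset.univ ∧ ¬ A ⊆ B)

/-- `λ ∈ Λ(A)`: a fractional partition, i.e. `0 ≤ λ_B ≤ 1` for every `B ∈ Γ(A)`
and `Σ_{B ∈ Γ(A) : j ∈ B} λ_B = 1` for every `j ∈ [m]`. -/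
def memLambda (m : ℕ) (A : Finset (Fin m)) (lam : Finset (Fin m) → ℝ) : Prop :=
  (∀ B ∈ Gamma m A, 0 ≤ lam B ∧ lam B ≤ 1) ∧
  ∀ j : Fin m, ∑ B ∈ (Gamma m A).filter (fun B => j ∈ B), lam B = 1


/-!
A terminal variable is a tuple of edge components, so for `B ⊆ [m]` the tuple `X_B` is, up to an
injective relabelling, the family indexed by the edges `f` of the parts of `(T_f, Y_f)` observed
inside `B` (`none` marking a component observed outside `B`). Since the edge pairs are independent,
entropies of such families add up over the edges, and `I(X_B ; X_{Bᶜ})` becomes a sum over edges: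
an edge with both endpoints on one side of `B` contributes `0`, an edge crossing `B` contributes
`I(T_f ; Y_f)`. When `B = B_e` is a side of the tree with `e` removed, `e` is the only crossing edge,
so the weight vector `1_{B_e} + 1_{B_eᶜ} ∈ Λ([m])` attains `I(T_e ; Y_e)`, which bounds the infimum.
-/

section Entropy

variable {Ω α β : Type*} [Fintype Ω] {p : Ω → ℝ}

lemma sum_probOf [Fintype α] [DecidableEq α] (hp1 : ∑ ω, p ω = 1) (X : Ω → α) :
    ∑ a, probOf p X a = 1 := by
  rw [← hp1]
  exact Finset.sum_fiberwise _ _ _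

lemma probOf_comp [Fintype α] [DecidableEq α] [DecidableEq β] (X : Ω → α) (f : α → β) (b : β) :
    probOf p (fun ω => f (X ω)) b = ∑ a with f a = b, probOf p X a := by
  unfold probOf
  rw [Finset.sum_fiberwise_eq_sum_filter]
  congr 1
  ext ω
  simp

lemma entropy_comp_injective [Fintype α] [DecidableEq α] [Fintype β] [DecidableEq β]
    (X : Ω → α) {f : α → β} (hf : Function.Injective f) :
    entropy p (fun ω => f (X ω)) = entropy p X := by
  refine (Fintype.sum_of_injective f hf _ _ (fun b hb => ?_) fun a => ?_).symm
  · rw [probOf_comp X f, Finset.sum_eq_zero, Real.negMulLog_zero]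
    simp only [Finset.mem_filter]
    exact fun a ha => absurd ⟨a, ha.2⟩ hb
  · rw [probOf_comp X f, Finset.sum_eq_single_of_mem a (by simp)]
    simp only [Finset.mem_filter]
    exact fun a' ha' hne => absurd (hf ha'.2) hne

lemma entropy_const [Fintype α] [DecidableEq α] (hp1 : ∑ ω, p ω = 1) (c : α) :
    entropy p (fun _ => c) = 0 := by
  have hprob (a : α) : probOf p (fun _ => c) a = if c = a then 1 else 0 := by
    by_cases h : c = a <;> simp [probOf, h, hp1]
  simp [entropy, hprob, apply_ite Real.negMulLog]

variable [Fintype α] [DecidableEq α] [Fintype β] [DecidableEq β]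

lemma mutualInfo_eq_entropy_sub_condEntropy (X : Ω → α) (Y : Ω → β) :
    mutualInfo p X Y = entropy p X - condEntropy p X Y := by
  unfold mutualInfo condEntropy
  ring

lemma entropy_mask_add_entropy_mask_sub (hp1 : ∑ ω, p ω = 1) (X : Ω → α) (Y : Ω → β)
    {a b a' b' : Prop} [Decidable a] [Decidable b] [Decidable a'] [Decidable b']
    (ha : a' ↔ ¬a) (hb : b' ↔ ¬b) :
    entropy p (fun ω => (if a then some (X ω) else none, if b then some (Y ω) else none))
      + entropy p (fun ω => (if a' then some (X ω) else none, if b' then some (Y ω) else none))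
      - entropy p (fun ω => (X ω, Y ω)) = if a ↔ b then 0 else mutualInfo p X Y := by
  have hXY := entropy_comp_injective (p := p) (fun ω => (X ω, Y ω))
    (f := fun xy => (some xy.1, some xy.2)) fun _ _ h =>
      Prod.ext (Option.some_injective _ (congrArg Prod.fst h))
        (Option.some_injective _ (congrArg Prod.snd h))
  have hX := entropy_comp_injective (p := p) X (f := fun x => (some x, (none : Option β)))
    fun _ _ h => Option.some_injective _ (congrArg Prod.fst h)
  have hY := entropy_comp_injective (p := p) Y (f := fun y => ((none : Option α), some y))
    fun _ _ h => Option.some_injective _ (congrArg Prod.snd h)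
  have h0 := entropy_const hp1 ((none, none) : Option α × Option β)
  by_cases a <;> by_cases b <;> simp_all [mutualInfo, add_comm]

end Entropy

lemma negMulLog_prod {ι : Type*} [DecidableEq ι] (s : Finset ι) (f : ι → ℝ) :
    Real.negMulLog (∏ i ∈ s, f i) = ∑ i ∈ s, (∏ j ∈ s.erase i, f j) * Real.negMulLog (f i) := by
  by_cases h : ∀ i ∈ s, f i ≠ 0
  · simp only [Real.negMulLog, Real.log_prod h, Finset.mul_sum]
    refine Finset.sum_congr rfl fun i hi => ?_
    rw [← Finset.mul_prod_erase s f hi]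
    ring
  · obtain ⟨i₀, hi₀, hf₀⟩ : ∃ i ∈ s, f i = 0 := by simpa using h
    rw [Finset.prod_eq_zero hi₀ hf₀, Real.negMulLog_zero, eq_comm]
    refine Finset.sum_eq_zero fun i hi => ?_
    by_cases hii : i = i₀
    · rw [hii, hf₀, Real.negMulLog_zero, mul_zero]
    · rw [Finset.prod_eq_zero (Finset.mem_erase.2 ⟨Ne.symm hii, hi₀⟩) hf₀, zero_mul]

lemma sum_pi_prod_erase_mul {ι : Type*} [Fintype ι] [DecidableEq ι] {D : ι → Type*}
    [∀ i, Fintype (D i)] (q h : ∀ i, D i → ℝ) (hq : ∀ i, ∑ a, q i a = 1) (i : ι) :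
    ∑ x : ∀ j, D j, (∏ j ∈ univ.erase i, q j (x j)) * h i (x i) = ∑ a, h i a := by
  set F : ∀ j, D j → ℝ := fun j a => if j = i then h j a else q j a
  have hF (x : ∀ j, D j) : (∏ j ∈ univ.erase i, q j (x j)) * h i (x i) = ∏ j, F j (x j) := by
    rw [← Finset.prod_erase_mul _ _ (mem_univ i)]
    simp only [F, if_pos rfl]
    congr 1
    exact Finset.prod_congr rfl fun j hj => (if_neg (Finset.ne_of_mem_erase hj)).symm
  rw [Finset.sum_congr rfl fun x _ => hF x, ← Fintype.prod_sum,
    ← Finset.prod_erase_mul _ _ (mem_univ i)]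
  simp only [F, if_pos rfl]
  rw [Finset.prod_eq_one fun j hj => by simp only [if_neg (Finset.ne_of_mem_erase hj), hq],
    one_mul]

section Independence

variable {Ω : Type*} [Fintype Ω] {p : Ω → ℝ} {ι : Type*} [Fintype ι]
  {D E : ι → Type*} [∀ i, Fintype (D i)] [∀ i, DecidableEq (D i)] [∀ i, DecidableEq (E i)]

def IndepFamily (p : Ω → ℝ) (X : ∀ i, Ω → D i) : Prop :=
  ∀ x : ∀ i, D i, probOf p (fun ω i => X i ω) x = ∏ i, probOf p (X i) (x i)

lemma IndepFamily.comp [DecidableEq ι] {X : ∀ i, Ω → D i} (hX : IndepFamily p X)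
    (g : ∀ i, D i → E i) : IndepFamily p (fun i ω => g i (X i ω)) := by
  intro y
  rw [probOf_comp (fun ω i => X i ω) (fun x i => g i (x i))]
  calc ∑ x with (fun i => g i (x i)) = y, probOf p (fun ω i => X i ω) x
      = ∑ x : ∀ i, D i, ∏ i, if g i (x i) = y i then probOf p (X i) (x i) else 0 := by
        rw [Finset.sum_filter]
        refine Finset.sum_congr rfl fun x _ => ?_
        rw [hX x, Fintype.prod_ite_zero]
        simp only [funext_iff]
    _ = ∏ i, ∑ a, if g i a = y i then probOf p (X i) a else 0 :=
        (Fintype.prod_sum fun i a => if g i a = y i then probOf p (X i) a else 0).symm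
    _ = ∏ i, probOf p (fun ω => g i (X i ω)) (y i) := by
        simp only [probOf_comp, Finset.sum_filter]

lemma IndepFamily.entropy_eq_sum [DecidableEq ι] (hp1 : ∑ ω, p ω = 1) {X : ∀ i, Ω → D i}
    (hX : IndepFamily p X) : entropy p (fun ω i => X i ω) = ∑ i, entropy p (X i) := by
  unfold entropy
  simp only [show ∀ x, probOf p (fun ω i => X i ω) x = _ from hX, negMulLog_prod]
  rw [Finset.sum_comm]
  exact Finset.sum_congr rfl fun i _ =>
    sum_pi_prod_erase_mul _ (fun j a => Real.negMulLog (probOf p (X j) a))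
      (fun j => sum_probOf hp1 (X j)) i

end Independence

section TreePIN

variable {Ω : Type*} [Fintype Ω] {p : Ω → ℝ} {m : ℕ} {ε : Type*} [Fintype ε] [DecidableEq ε]
  (tl hd : ε → Fin m) {Tt Yt : ε → Type*} [∀ e, Fintype (Tt e)] [∀ e, DecidableEq (Tt e)]
  [∀ e, Fintype (Yt e)] [∀ e, DecidableEq (Yt e)] {Te : ∀ e, Ω → Tt e} {Ye : ∀ e, Ω → Yt e}

lemma entropy_termRV_eq_sum (hp1 : ∑ ω, p ω = 1) (hindep : IndepEdgePairs p Te Ye) :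
    entropy p (fun ω k => termRV tl hd Te Ye k ω)
      = ∑ e, entropy p (fun ω => (Te e ω, Ye e ω)) := by
  let F (π : ∀ e, Tt e × Yt e) (k : Fin m) :
      (∀ e : {e // tl e = k}, Tt e.1) × (∀ e : {e // hd e = k}, Yt e.1) :=
    (fun e => (π e.1).1, fun e => (π e.1).2)
  have hF : Function.Injective F := fun π π' h => funext fun e =>
    Prod.ext (congrFun (congrArg Prod.fst (congrFun h (tl e))) ⟨e, rfl⟩)
      (congrFun (congrArg Prod.snd (congrFun h (hd e))) ⟨e, rfl⟩)
  have h := entropy_comp_injective (p := p) (fun ω e => (Te e ω, Ye e ω)) hF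
  have hsum := IndepFamily.entropy_eq_sum hp1 (X := fun e ω => (Te e ω, Ye e ω)) hindep
  rw [← hsum, ← h]
  rfl

lemma entropy_termTuple (hp1 : ∑ ω, p ω = 1) (hindep : IndepEdgePairs p Te Ye)
    (B : Finset (Fin m)) :
    entropy p (termTuple tl hd Te Ye B)
      = ∑ e, entropy p (fun ω => (if tl e ∈ B then some (Te e ω) else none,
          if hd e ∈ B then some (Ye e ω) else none)) := by
  let G (ξ : ∀ k : B, (∀ e : {e // tl e = k.1}, Tt e.1) × (∀ e : {e // hd e = k.1}, Yt e.1))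
      (e : ε) : Option (Tt e) × Option (Yt e) :=
    (if h : tl e ∈ B then some ((ξ ⟨tl e, h⟩).1 ⟨e, rfl⟩) else none,
      if h : hd e ∈ B then some ((ξ ⟨hd e, h⟩).2 ⟨e, rfl⟩) else none)
  have hG : Function.Injective G := by
    intro ξ ξ' h
    funext k
    refine Prod.ext (funext ?_) (funext ?_) <;> rintro ⟨e, he⟩
    · have hmem : tl e ∈ B := he ▸ k.2
      obtain rfl : (⟨tl e, hmem⟩ : B) = k := Subtype.ext he
      simpa [G, hmem] using congrArg Prod.fst (congrFun h e)
    · have hmem : hd e ∈ B := he ▸ k.2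
      obtain rfl : (⟨hd e, hmem⟩ : B) = k := Subtype.ext he
      simpa [G, hmem] using congrArg Prod.snd (congrFun h e)
  have h := entropy_comp_injective (p := p) (termTuple tl hd Te Ye B) hG
  have hsum := (IndepFamily.comp (X := fun e ω => (Te e ω, Ye e ω)) hindep
    fun e (ty : Tt e × Yt e) =>
      (if tl e ∈ B then some ty.1 else none, if hd e ∈ B then some ty.2 else none)).entropy_eq_sum
    hp1
  rw [← h, ← hsum]
  rfl

-- The default size bound of instance search is too small for `DecidableEq` of `(X_B, X_{Bᶜ})`.
set_option synthInstance.maxSize 512 in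
variable (p Te Ye) in
lemma condEntropy_termTuple_compl (B : Finset (Fin m)) :
    condEntropy p (termTuple tl hd Te Ye B) (termTuple tl hd Te Ye Bᶜ)
      = entropy p (fun ω k => termRV tl hd Te Ye k ω) - entropy p (termTuple tl hd Te Ye Bᶜ) := by
  have hres : Function.Injective fun (ξ : ∀ k, (∀ e : {e // tl e = k}, Tt e.1) ×
      (∀ e : {e // hd e = k}, Yt e.1)) => (fun k : B => ξ k, fun k : (Bᶜ : Finset _) => ξ k) := by
    intro ξ ξ' h
    funext k
    by_cases hk : k ∈ B
    · exact congrFun (congrArg Prod.fst h) ⟨k, hk⟩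
    · exact congrFun (congrArg Prod.snd h) ⟨k, Finset.mem_compl.2 hk⟩
  have h := entropy_comp_injective (p := p) (fun ω k => termRV tl hd Te Ye k ω) hres
  unfold condEntropy termTuple
  rw [← h]

variable (p Te Ye) in
lemma entropy_sub_condEntropy_sub_condEntropy_termTuple (B : Finset (Fin m)) :
    entropy p (fun ω k => termRV tl hd Te Ye k ω)
        - condEntropy p (termTuple tl hd Te Ye B) (termTuple tl hd Te Ye Bᶜ)
        - condEntropy p (termTuple tl hd Te Ye Bᶜ) (termTuple tl hd Te Ye B)
      = mutualInfo p (termTuple tl hd Te Ye B) (termTuple tl hd Te Ye Bᶜ) := by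
  have hswap := condEntropy_termTuple_compl p tl hd Te Ye Bᶜ
  rw [compl_compl] at hswap
  rw [hswap, mutualInfo_eq_entropy_sub_condEntropy, condEntropy_termTuple_compl]
  ring

lemma mutualInfo_termTuple_compl (hp1 : ∑ ω, p ω = 1) (hindep : IndepEdgePairs p Te Ye)
    (B : Finset (Fin m)) :
    mutualInfo p (termTuple tl hd Te Ye B) (termTuple tl hd Te Ye Bᶜ)
      = ∑ e, if (tl e ∈ B ↔ hd e ∈ B) then 0 else mutualInfo p (Te e) (Ye e) := by
  rw [mutualInfo_eq_entropy_sub_condEntropy, condEntropy_termTuple_compl,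
    entropy_termRV_eq_sum tl hd hp1 hindep, entropy_termTuple tl hd hp1 hindep,
    entropy_termTuple tl hd hp1 hindep, sub_sub_eq_add_sub, ← Finset.sum_add_distrib,
    ← Finset.sum_sub_distrib]
  exact Finset.sum_congr rfl fun e _ =>
    entropy_mask_add_entropy_mask_sub hp1 _ _ Finset.mem_compl Finset.mem_compl

lemma mutualInfo_termTuple_compl_of_crossing (hp1 : ∑ ω, p ω = 1)
    (hindep : IndepEdgePairs p Te Ye) {e : ε} {B : Finset (Fin m)}
    (hcross : ¬(tl e ∈ B ↔ hd e ∈ B)) (hother : ∀ f ≠ e, (tl f ∈ B ↔ hd f ∈ B)) :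
    mutualInfo p (termTuple tl hd Te Ye B) (termTuple tl hd Te Ye Bᶜ)
      = mutualInfo p (Te e) (Ye e) := by
  rw [mutualInfo_termTuple_compl tl hd hp1 hindep, Finset.sum_eq_single e, if_neg hcross]
  · exact fun f _ hf => if_pos (hother f hf)
  · simp

end TreePIN

namespace SimpleGraph

variable {V : Type*} {G : SimpleGraph V}

lemma reachable_deleteEdges_iff_of_adj {u v w x y : V} (hxy : G.Adj x y)
    (hne : s(x, y) ≠ s(u, v)) :
    (G.deleteEdges {s(u, v)}).Reachable w x ↔ (G.deleteEdges {s(u, v)}).Reachable w y := by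
  have hadj : (G.deleteEdges {s(u, v)}).Adj x y := by simp [hxy, hne]
  exact ⟨fun h => h.trans hadj.reachable, fun h => h.trans hadj.symm.reachable⟩

lemma IsAcyclic.crossing_of_deleteEdges (hG : G.IsAcyclic) {u v : V} (huv : G.Adj u v)
    {B : Finset V}
    (hB : (∀ k, k ∈ B ↔ (G.deleteEdges {s(u, v)}).Reachable u k) ∨
      (∀ k, k ∈ B ↔ (G.deleteEdges {s(u, v)}).Reachable v k)) :
    ¬(u ∈ B ↔ v ∈ B) ∧ ∀ ⦃x y⦄, G.Adj x y → s(x, y) ≠ s(u, v) → (x ∈ B ↔ y ∈ B) := by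
  have hbridge : ¬(G.deleteEdges {s(u, v)}).Reachable u v :=
    isBridge_iff.1 (isAcyclic_iff_forall_adj_isBridge.1 hG huv)
  rcases hB with hB | hB <;> refine ⟨?_, fun x y hxy hne => ?_⟩
  · simpa [hB] using hbridge
  · rw [hB, hB]
    exact reachable_deleteEdges_iff_of_adj hxy hne
  · simpa [hB] using fun h => hbridge h.symm
  · rw [hB, hB]
    exact reachable_deleteEdges_iff_of_adj hxy hne

end SimpleGraph

section TreeGraph

variable {m : ℕ} {ε : Type*} {tl hd : ε → Fin m}

lemma graphOf_adj {e : ε} (he : tl e ≠ hd e) : (graphOf tl hd).Adj (tl e) (hd e) := by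
  simp only [graphOf, SimpleGraph.fromRel_adj]
  exact ⟨he, Or.inl ⟨e, rfl, rfl⟩⟩

lemma crossing_of_graphOf_side (hG : (graphOf tl hd).IsAcyclic) (hloop : ∀ e, tl e ≠ hd e)
    (hinj : Function.Injective (fun e => s(tl e, hd e))) {e : ε} {B : Finset (Fin m)}
    (hB : (∀ k, k ∈ B ↔ ((graphOf tl hd).deleteEdges {s(tl e, hd e)}).Reachable (tl e) k) ∨
      (∀ k, k ∈ B ↔ ((graphOf tl hd).deleteEdges {s(tl e, hd e)}).Reachable (hd e) k)) :
    ¬(tl e ∈ B ↔ hd e ∈ B) ∧ ∀ f ≠ e, (tl f ∈ B ↔ hd f ∈ B) := by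
  obtain ⟨hcross, hother⟩ := hG.crossing_of_deleteEdges (graphOf_adj (hloop e)) hB
  exact ⟨hcross, fun f hf => hother (graphOf_adj (hloop f)) fun h => hf (hinj h)⟩

end TreeGraph

lemma nonempty_and_compl_nonempty_of_not_iff {V : Type*} [Fintype V] [DecidableEq V]
    {B : Finset V} {a b : V} (h : ¬(a ∈ B ↔ b ∈ B)) : B.Nonempty ∧ Bᶜ.Nonempty := by
  by_cases ha : a ∈ B
  · exact ⟨⟨a, ha⟩, b, by simpa [ha] using h⟩
  · exact ⟨⟨b, by simpa [ha] using h⟩, a, Finset.mem_compl.2 ha⟩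

section FractionalPartition

variable {m : ℕ} {B : Finset (Fin m)}

lemma mem_Gamma_univ : B ∈ Gamma m univ ↔ B.Nonempty ∧ Bᶜ.Nonempty := by
  simp [Gamma, Finset.univ_subset_iff, ← Finset.compl_ne_univ_iff_nonempty Bᶜ]

lemma sum_Gamma_indicator_pair_mul (hB : B.Nonempty) (hBc : Bᶜ.Nonempty)
    (g : Finset (Fin m) → ℝ) :
    ∑ C ∈ Gamma m univ, (if C = B ∨ C = Bᶜ then 1 else 0) * g C = g B + g Bᶜ := by
  have hfilter : (Gamma m univ).filter (fun C => C = B ∨ C = Bᶜ) = {B, Bᶜ} := by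
    ext C
    simp only [Finset.mem_filter, mem_Gamma_univ, Finset.mem_insert, Finset.mem_singleton]
    constructor
    · exact And.right
    · rintro (rfl | rfl) <;> simp_all
  have hne : B ≠ Bᶜ := fun h => by
    obtain ⟨x, hx⟩ := hB
    exact Finset.mem_compl.1 (h ▸ hx) hx
  simp only [ite_mul, one_mul, zero_mul]
  rw [← Finset.sum_filter, hfilter, Finset.sum_pair hne]

lemma memLambda_indicator_pair (hB : B.Nonempty) (hBc : Bᶜ.Nonempty) :
    memLambda m univ (fun C => if C = B ∨ C = Bᶜ then 1 else 0) := by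
  refine ⟨fun C _ => by dsimp only; split_ifs <;> norm_num, fun j => ?_⟩
  rw [Finset.sum_filter, Finset.sum_congr rfl fun C _ => (mul_boole (j ∈ C) _).symm,
    sum_Gamma_indicator_pair_mul hB hBc]
  by_cases hj : j ∈ B <;> simp [hj]

lemma bddBelow_sub_sum_memLambda (A : Finset (Fin m)) (c : ℝ) (g : Finset (Fin m) → ℝ) :
    BddBelow {x : ℝ | ∃ lam, memLambda m A lam ∧ x = c - ∑ C ∈ Gamma m A, lam C * g C} := by
  refine ⟨c - ∑ C ∈ Gamma m A, |g C|, ?_⟩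
  rintro x ⟨lam, ⟨hlam, -⟩, rfl⟩
  gcongr with C hC
  obtain ⟨h0, h1⟩ := hlam C hC
  calc lam C * g C ≤ lam C * |g C| := mul_le_mul_of_nonneg_left (le_abs_self _) h0
    _ ≤ |g C| := mul_le_of_le_one_left (abs_nonneg _) h1

end FractionalPartition
theorem treePIN_CN_expression_le_min_edge_mutualInfo_general
    {Ω : Type*} [Fintype Ω] {m : ℕ} {ε : Type*} [Fintype ε] [DecidableEq ε]
    [Nonempty ε]
    (tl hd : ε → Fin m)
    {Tt Yt : ε → Type*} [∀ e, Fintype (Tt e)] [∀ e, DecidableEq (Tt e)]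
    [∀ e, Fintype (Yt e)] [∀ e, DecidableEq (Yt e)]
    (p : Ω → ℝ) (hp1 : ∑ ω : Ω, p ω = 1)
    (Te : ∀ e, Ω → Tt e) (Ye : ∀ e, Ω → Yt e)
    -- the underlying undirected graph is a tree with edge set `ε`
    (htree : (graphOf tl hd).IsTree)
    (hloop : ∀ e, tl e ≠ hd e)
    (hinj : Function.Injective (fun e => s(tl e, hd e)))
    -- the edge pairs are mutually independent across edges
    (hindep : IndepEdgePairs p Te Ye)
    (Be : ε → Finset (Fin m))
    -- for every edge `e`, `B_e` is the vertex set of one of the two connected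
    -- components of the tree with the edge `e` removed
    (hBe : ∀ e, (∀ k, k ∈ Be e ↔
        ((graphOf tl hd).deleteEdges {s(tl e, hd e)}).Reachable (tl e) k) ∨
      (∀ k, k ∈ Be e ↔
        ((graphOf tl hd).deleteEdges {s(tl e, hd e)}).Reachable (hd e) k)) :
    -- the two-set weight vector `λ_{B_e} = λ_{B_e^c} = 1` (and `0` elsewhere) belongs
    -- to `Λ([m])` and achieves the value
    -- `H(X_[m]) − H(X_{B_e}|X_{B_e^c}) − H(X_{B_e^c}|X_{B_e}) = I(X_{B_e};X_{B_e^c}) = I(T_e;Y_e)`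
    (∀ e : ε,
      memLambda m Finset.univ (fun B => if B = Be e ∨ B = (Be e)ᶜ then (1 : ℝ) else 0) ∧
      entropy p (fun ω (k : Fin m) => termRV tl hd Te Ye k ω)
          - ∑ B ∈ Gamma m Finset.univ,
              (if B = Be e ∨ B = (Be e)ᶜ then (1 : ℝ) else 0)
                * condEntropy p (termTuple tl hd Te Ye B) (termTuple tl hd Te Ye Bᶜ)
        = entropy p (fun ω (k : Fin m) => termRV tl hd Te Ye k ω)
          - condEntropy p (termTuple tl hd Te Ye (Be e)) (termTuple tl hd Te Ye (Be e)ᶜ)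
          - condEntropy p (termTuple tl hd Te Ye (Be e)ᶜ) (termTuple tl hd Te Ye (Be e)) ∧
      entropy p (fun ω (k : Fin m) => termRV tl hd Te Ye k ω)
          - condEntropy p (termTuple tl hd Te Ye (Be e)) (termTuple tl hd Te Ye (Be e)ᶜ)
          - condEntropy p (termTuple tl hd Te Ye (Be e)ᶜ) (termTuple tl hd Te Ye (Be e))
        = mutualInfo p (termTuple tl hd Te Ye (Be e)) (termTuple tl hd Te Ye (Be e)ᶜ) ∧
      mutualInfo p (termTuple tl hd Te Ye (Be e)) (termTuple tl hd Te Ye (Be e)ᶜ)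
        = mutualInfo p (Te e) (Ye e)) ∧
    -- hence `min_{λ ∈ Λ([m])} (H(X_[m]) − Σ_{B ∈ Γ([m])} λ_B H(X_B|X_{B^c}))
    --        ≤ min_{e ∈ E} I(T_e ; Y_e)`
    sInf {x : ℝ | ∃ lam : Finset (Fin m) → ℝ, memLambda m Finset.univ lam ∧
        x = entropy p (fun ω (k : Fin m) => termRV tl hd Te Ye k ω)
          - ∑ B ∈ Gamma m Finset.univ,
              lam B * condEntropy p (termTuple tl hd Te Ye B) (termTuple tl hd Te Ye Bᶜ)}
      ≤ ⨅ e : ε, mutualInfo p (Te e) (Ye e) := by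
  have hcut (e : ε) := crossing_of_graphOf_side htree.isAcyclic hloop hinj (hBe e)
  have hnonempty (e : ε) := nonempty_and_compl_nonempty_of_not_iff (hcut e).1
  have hlam (e : ε) := memLambda_indicator_pair (hnonempty e).1 (hnonempty e).2
  have hsum (e : ε) := sum_Gamma_indicator_pair_mul (hnonempty e).1 (hnonempty e).2
    fun B => condEntropy p (termTuple tl hd Te Ye B) (termTuple tl hd Te Ye Bᶜ)
  have hCN (e : ε) := entropy_sub_condEntropy_sub_condEntropy_termTuple p tl hd Te Ye (Be e)
  have hMI (e : ε) := mutualInfo_termTuple_compl_of_crossing tl hd hp1 hindep (hcut e).1 (hcut e).2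
  refine ⟨fun e => ⟨hlam e, ?_, hCN e, hMI e⟩, le_ciInf fun e => ?_⟩
  · rw [hsum, compl_compl]
    ring
  · refine (csInf_le (bddBelow_sub_sum_memLambda _ _ _) ⟨_, hlam e, rfl⟩).trans_eq ?_
    rw [hsum, compl_compl, ← hMI e, ← hCN e]
    ring

theorem treePIN_CN_expression_le_min_edge_mutualInfo
    {Ω : Type*} [Fintype Ω] {m : ℕ} {ε : Type*} [Fintype ε] [DecidableEq ε]
    [Nonempty ε]
    (tl hd : ε → Fin m)
    {Tt Yt : ε → Type*} [∀ e, Fintype (Tt e)] [∀ e, DecidableEq (Tt e)]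
    [∀ e, Fintype (Yt e)] [∀ e, DecidableEq (Yt e)]
    (p : Ω → ℝ) (hp : ∀ ω, 0 ≤ p ω) (hp1 : ∑ ω : Ω, p ω = 1)
    (Te : ∀ e, Ω → Tt e) (Ye : ∀ e, Ω → Yt e)
    (hm : 2 ≤ m)
    -- the underlying undirected graph is a tree with edge set `ε`
    (htree : (graphOf tl hd).IsTree)
    (hloop : ∀ e, tl e ≠ hd e)
    (hinj : Function.Injective (fun e => s(tl e, hd e)))
    -- the edge pairs are mutually independent across edges
    (hindep : IndepEdgePairs p Te Ye)
    (Be : ε → Finset (Fin m))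
    -- for every edge `e`, `B_e` is the vertex set of one of the two connected
    -- components of the tree with the edge `e` removed
    (hBe : ∀ e, (∀ k, k ∈ Be e ↔
        ((graphOf tl hd).deleteEdges {s(tl e, hd e)}).Reachable (tl e) k) ∨
      (∀ k, k ∈ Be e ↔
        ((graphOf tl hd).deleteEdges {s(tl e, hd e)}).Reachable (hd e) k)) :
    -- the two-set weight vector `λ_{B_e} = λ_{B_e^c} = 1` (and `0` elsewhere) belongs
    -- to `Λ([m])` and achieves the value
    -- `H(X_[m]) − H(X_{B_e}|X_{B_e^c}) − H(X_{B_e^c}|X_{B_e}) = I(X_{B_e};X_{B_e^c}) = I(T_e;Y_e)`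
    (∀ e : ε,
      memLambda m Finset.univ (fun B => if B = Be e ∨ B = (Be e)ᶜ then (1 : ℝ) else 0) ∧
      entropy p (fun ω (k : Fin m) => termRV tl hd Te Ye k ω)
          - ∑ B ∈ Gamma m Finset.univ,
              (if B = Be e ∨ B = (Be e)ᶜ then (1 : ℝ) else 0)
                * condEntropy p (termTuple tl hd Te Ye B) (termTuple tl hd Te Ye Bᶜ)
        = entropy p (fun ω (k : Fin m) => termRV tl hd Te Ye k ω)
          - condEntropy p (termTuple tl hd Te Ye (Be e)) (termTuple tl hd Te Ye (Be e)ᶜ)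
          - condEntropy p (termTuple tl hd Te Ye (Be e)ᶜ) (termTuple tl hd Te Ye (Be e)) ∧
      entropy p (fun ω (k : Fin m) => termRV tl hd Te Ye k ω)
          - condEntropy p (termTuple tl hd Te Ye (Be e)) (termTuple tl hd Te Ye (Be e)ᶜ)
          - condEntropy p (termTuple tl hd Te Ye (Be e)ᶜ) (termTuple tl hd Te Ye (Be e))
        = mutualInfo p (termTuple tl hd Te Ye (Be e)) (termTuple tl hd Te Ye (Be e)ᶜ) ∧
      mutualInfo p (termTuple tl hd Te Ye (Be e)) (termTuple tl hd Te Ye (Be e)ᶜ)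
        = mutualInfo p (Te e) (Ye e)) ∧
    -- hence `min_{λ ∈ Λ([m])} (H(X_[m]) − Σ_{B ∈ Γ([m])} λ_B H(X_B|X_{B^c}))
    --        ≤ min_{e ∈ E} I(T_e ; Y_e)`
    sInf {x : ℝ | ∃ lam : Finset (Fin m) → ℝ, memLambda m Finset.univ lam ∧
        x = entropy p (fun ω (k : Fin m) => termRV tl hd Te Ye k ω)
          - ∑ B ∈ Gamma m Finset.univ,
              lam B * condEntropy p (termTuple tl hd Te Ye B) (termTuple tl hd Te Ye Bᶜ)}
      ≤ ⨅ e : ε, mutualInfo p (Te e) (Ye e) :=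
  treePIN_CN_expression_le_min_edge_mutualInfo_general tl hd p hp1 Te Ye htree hloop hinj hindep Be
    hBe
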